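/- arXiv:1609.02310 — 5 statements merged into one kernel-verified Lean document; each statement's English description precedes it below -/
import Mathlib

section
/- The number of N-tuples (d_1, ..., d_N) of monic polynomials over a finite field F with q elements, with deg(d_i) = n_i ≥ 1 for each i, such that gcd(d_1, ..., d_N) = 1, equals q^{n_1 + ... + n_N} · (1 - q^{-(N-1)}). Equivalently, the probability that N uniformly random monic polynomials of fixed positive degrees are coprime is 1 - q^{-(N-1)}. -/
open Polynomial Finset

namespace Stmt2Aux

attribute [local instance] Classical.decEq

variable (F : Type*) [Field F] [Fintype F]

/-- Monic polynomials of a fixed degree. -/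
abbrev Mn (k : ℕ) := {p : Polynomial F // p.Monic ∧ p.natDegree = k}

noncomputable def mnEquiv (k : ℕ) : Mn F k ≃ (Fin k → F) :=
  (monicEquivDegreeLT k).trans (degreeLTEquiv F k).toEquiv

instance (k : ℕ) : Finite (Mn F k) := Finite.of_equiv _ (mnEquiv F k).symm

lemma card_Mn (k : ℕ) : Nat.card (Mn F k) = (Fintype.card F) ^ k := by
  rw [Nat.card_congr (mnEquiv F k), Nat.card_fun]
  simp [Nat.card_eq_fintype_card]

variable (N : ℕ)

/-- Tuples of monic polynomials of given degrees. -/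
abbrev Tup (n : Fin N → ℕ) :=
  {d : Fin N → Polynomial F // ∀ i, (d i).Monic ∧ (d i).natDegree = n i}

def tupEquiv (n : Fin N → ℕ) : Tup F N n ≃ ∀ i, Mn F (n i) :=
  Equiv.subtypePiEquivPi (β := fun _ => Polynomial F) (p := fun i p => p.Monic ∧ p.natDegree = n i)

instance (n : Fin N → ℕ) : Finite (Tup F N n) := Finite.of_equiv _ (tupEquiv F N n).symm

lemma card_Tup (n : Fin N → ℕ) : Nat.card (Tup F N n) = (Fintype.card F) ^ (∑ i, n i) := by
  rw [Nat.card_congr (tupEquiv F N n), Nat.card_pi]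
  simp_rw [card_Mn]
  rw [Finset.prod_pow_eq_pow_sum]

/-- Coprime tuples of monic polynomials of given degrees. -/
abbrev Cop (n : Fin N → ℕ) := {d : Fin N → Polynomial F //
    (∀ i, (d i).Monic ∧ (d i).natDegree = n i) ∧
    (∀ g : Polynomial F, (∀ i, g ∣ d i) → IsUnit g)}

instance (n : Fin N → ℕ) : Finite (Cop F N n) :=
  Finite.of_injective (fun d : Cop F N n => (⟨d.1, d.2.1⟩ : Tup F N n))
    (fun a b h => Subtype.ext (congrArg (fun t : Tup F N n => t.1) h))

variable {N}

/-- Minimum of the degrees. -/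
def M (hN : 0 < N) (n : Fin N → ℕ) : ℕ :=
  (univ : Finset (Fin N)).inf' (univ_nonempty_iff.2 ⟨⟨0, hN⟩⟩) n

lemma M_le (hN : 0 < N) (n : Fin N → ℕ) (i : Fin N) : M hN n ≤ n i :=
  Finset.inf'_le _ (mem_univ i)

lemma le_M (hN : 0 < N) (n : Fin N → ℕ) (k : ℕ) (h : ∀ i, k ≤ n i) : k ≤ M hN n :=
  Finset.le_inf' _ _ fun i _ => h i

noncomputable def psi (hN : 0 < N) (n : Fin N → ℕ) :
    (Σ k : Fin (M hN n + 1), Mn F k.1 × Cop F N (fun i => n i - k.1)) → Tup F N n :=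
  fun x => ⟨fun i => x.2.1.1 * x.2.2.1 i, by
    obtain ⟨k, ⟨g, hg⟩, ⟨e, he⟩⟩ := x
    intro i
    have h1 : k.1 ≤ n i := by
      have h2 := k.2; have h3 := M_le hN n i; omega
    refine ⟨hg.1.mul (he.1 i).1, ?_⟩
    rw [Polynomial.natDegree_mul hg.1.ne_zero (he.1 i).1.ne_zero, hg.2, (he.1 i).2]
    show k.1 + (n i - k.1) = n i
    omega⟩

/-- For a coprime family, `g * e i` has gcd associated to `g`. -/
lemma gcd_mul_assoc (hN : 0 < N) {g : Polynomial F} {e : Fin N → Polynomial F}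
    (hcop : ∀ h : Polynomial F, (∀ i, h ∣ e i) → IsUnit h) :
    Associated ((univ : Finset (Fin N)).gcd fun i => g * e i) g := by
  rw [Finset.gcd_mul_left]
  have hu : IsUnit ((univ : Finset (Fin N)).gcd e) :=
    hcop _ fun i => Finset.gcd_dvd (mem_univ i)
  exact (associated_mul_unit_left _ _ hu).trans (normalize_associated g)

lemma psi_bijective (hN : 0 < N) (n : Fin N → ℕ) : Function.Bijective (psi F hN n) := by
  constructor
  · rintro ⟨k, ⟨g, hg⟩, ⟨e, he⟩⟩ ⟨k', ⟨g', hg'⟩, ⟨e', he'⟩⟩ h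
    have hfun : (fun i => g * e i) = fun i => g' * e' i := congrArg Subtype.val h
    have hassoc : Associated g g' := by
      refine Associated.trans ?_ (gcd_mul_assoc F hN he'.2)
      rw [← hfun]
      exact (gcd_mul_assoc F hN he.2).symm
    have hgg : g = g' := Polynomial.eq_of_monic_of_associated hg.1 hg'.1 hassoc
    have hk : k = k' := Fin.ext (by rw [← hg.2, ← hg'.2, hgg])
    subst hk
    have hee : e = e' := by
      funext i
      have h2 := congrFun hfun i
      rw [hgg] at h2
      exact mul_left_cancel₀ hg'.1.ne_zero h2
    subst hgg; subst hee
    rfl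
  · rintro ⟨d, hd⟩
    have hd0 : ∀ i, d i ≠ 0 := fun i => (hd i).1.ne_zero
    set g0 := (univ : Finset (Fin N)).gcd d with hg0def
    have hg00 : g0 ≠ 0 := by
      intro h
      exact hd0 ⟨0, hN⟩ (Finset.gcd_eq_zero_iff.1 h _ (mem_univ _))
    set g := g0 * C g0.leadingCoeff⁻¹ with hgdef
    have hgm : g.Monic := monic_mul_leadingCoeff_inv hg00
    have hga : Associated g0 g :=
      (associated_mul_unit_left g0 _ (Polynomial.isUnit_C.2
        (isUnit_iff_ne_zero.2 (inv_ne_zero (leadingCoeff_ne_zero.2 hg00))))).symm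
    have hgdvd : ∀ i, g ∣ d i := fun i => hga.symm.dvd.trans (Finset.gcd_dvd (mem_univ i))
    have hgle : ∀ i, g.natDegree ≤ n i := fun i => by
      have h2 := Polynomial.natDegree_le_of_dvd (hgdvd i) (hd0 i)
      rwa [(hd i).2] at h2
    have hkle : g.natDegree ≤ M hN n := le_M hN n _ hgle
    choose e heq using hgdvd
    have he0 : ∀ i, e i ≠ 0 := by
      intro i h
      exact hd0 i (by rw [heq i, h, mul_zero])
    have hem : ∀ i, (e i).Monic := by
      intro i
      have h2 := (hd i).1
      rw [heq i] at h2
      unfold Polynomial.Monic at h2 ⊢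
      rwa [Polynomial.leadingCoeff_mul, hgm.leadingCoeff, one_mul] at h2
    have hed : ∀ i, (e i).natDegree = n i - g.natDegree := by
      intro i
      have h2 := (hd i).2
      rw [heq i, Polynomial.natDegree_mul hgm.ne_zero (he0 i)] at h2
      omega
    refine ⟨⟨⟨g.natDegree, by omega⟩, ⟨g, hgm, rfl⟩, ⟨e, ⟨fun i => ⟨hem i, hed i⟩, ?_⟩⟩⟩,
      Subtype.ext (funext fun i => (heq i).symm)⟩
    intro h hh
    have hdvd : g * h ∣ g := by
      refine Dvd.dvd.trans ?_ hga.dvd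
      apply Finset.dvd_gcd
      intro i _
      rw [heq i]
      exact mul_dvd_mul_left g (hh i)
    have h1 : h ∣ 1 := (mul_dvd_mul_iff_left hgm.ne_zero).mp (by simpa using hdvd)
    exact isUnit_of_dvd_one h1

lemma nat_card_sigma {m : ℕ} (f : Fin m → Type*) [∀ i, Finite (f i)] :
    Nat.card (Σ i, f i) = ∑ i, Nat.card (f i) := by
  have := fun i => Fintype.ofFinite (f i)
  simp [Nat.card_eq_fintype_card, Fintype.card_sigma]

lemma rec_card (hN : 0 < N) (n : Fin N → ℕ) :
    (Fintype.card F) ^ (∑ i, n i)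
      = ∑ k ∈ Finset.range (M hN n + 1),
          (Fintype.card F) ^ k * Nat.card (Cop F N fun i => n i - k) := by
  have h := Nat.card_eq_of_bijective _ (psi_bijective F hN n)
  rw [card_Tup] at h
  rw [← h, nat_card_sigma]
  rw [← Fin.sum_univ_eq_sum_range
    (fun k => (Fintype.card F) ^ k * Nat.card (Cop F N fun i => n i - k))]
  congr 1
  funext k
  rw [Nat.card_prod, card_Mn]

end Stmt2Aux

open Stmt2Aux in
/-- The number of `N`-tuples of monic polynomials of degrees `n i ≥ 1` over a finite
field with `q` elements that are coprime (gcd equal to `1`, i.e. every common divisor is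
a unit) equals `q ^ (n 1 + ⋯ + n N) * (1 - q⁻¹ ^ (N - 1))`. -/
theorem stmt2 (F : Type*) [Field F] [Fintype F] (N : ℕ) (hN : 2 ≤ N)
    (n : Fin N → ℕ) (hn : ∀ i, 1 ≤ n i) :
    (Nat.card {d : Fin N → Polynomial F //
        (∀ i, (d i).Monic ∧ (d i).natDegree = n i) ∧
        (∀ g : Polynomial F, (∀ i, g ∣ d i) → IsUnit g)} : ℚ) =
      (Fintype.card F : ℚ) ^ (∑ i, n i) *
        (1 - ((Fintype.card F : ℚ))⁻¹ ^ (N - 1)) := by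
  have hN0 : 0 < N := by omega
  have hq1 : 1 ≤ Fintype.card F := Fintype.card_pos
  set q := Fintype.card F with hq
  set S := ∑ i, n i with hS
  have hSN : N ≤ S := by
    calc N = ∑ _i : Fin N, 1 := by simp
    _ ≤ S := Finset.sum_le_sum fun i _ => hn i
  set m := M hN0 n with hm
  have hm1 : 1 ≤ m := le_M hN0 n 1 hn
  have R1 : q ^ S = ∑ k ∈ Finset.range (m + 1),
      q ^ k * Nat.card (Cop F N fun i => n i - k) := rec_card F hN0 n
  have hMsub : M hN0 (fun i => n i - 1) = m - 1 := by
    apply le_antisymm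
    · obtain ⟨i, -, hi⟩ := Finset.exists_mem_eq_inf'
        (univ_nonempty_iff.2 ⟨⟨0, hN0⟩⟩) n
      have hi' : m = n i := hi
      have h2 : M hN0 (fun i => n i - 1) ≤ n i - 1 := M_le hN0 _ i
      omega
    · exact le_M hN0 _ _ fun i => by have := M_le hN0 n i; omega
  have R2 : q ^ (S - N) = ∑ k ∈ Finset.range m,
      q ^ k * Nat.card (Cop F N fun i => (n i - 1) - k) := by
    have hsub : ∑ i, (n i - 1) = S - N := by
      have h2 : ∑ i, ((n i - 1) + 1) = S := by
        rw [hS]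
        exact Finset.sum_congr rfl fun i _ => by have := hn i; omega
      rw [Finset.sum_add_distrib] at h2
      simp at h2
      omega
    have h3 := rec_card F hN0 (fun i => n i - 1)
    rw [hMsub, Nat.sub_add_cancel hm1, hsub] at h3
    exact h3
  have hC0 : (fun i => n i - 0) = n := by funext i; simp
  rw [Finset.sum_range_succ'] at R1
  simp only [pow_zero, one_mul, hC0] at R1
  have R2' : q * q ^ (S - N) = ∑ k ∈ Finset.range m,
      q ^ (k + 1) * Nat.card (Cop F N fun i => n i - (k + 1)) := by
    rw [R2, Finset.mul_sum]
    apply Finset.sum_congr rfl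
    intro k _
    have h4 : (fun i => n i - 1 - k) = fun i => n i - (k + 1) := by funext i; omega
    rw [h4]
    ring
  rw [← R2'] at R1
  have key : Nat.card (Cop F N n) + q ^ (S - (N - 1)) = q ^ S := by
    have h1 : q * q ^ (S - N) = q ^ (S - (N - 1)) := by
      rw [← pow_succ']
      congr 1
      omega
    omega
  show (Nat.card (Cop F N n) : ℚ) = (q : ℚ) ^ S * (1 - ((q : ℚ))⁻¹ ^ (N - 1))
  have hqQ : (q : ℚ) ≠ 0 := by positivity
  have hcast : (Nat.card (Cop F N n) : ℚ) = (q : ℚ) ^ S - (q : ℚ) ^ (S - (N - 1)) := by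
    have h5 := congrArg (Nat.cast (R := ℚ)) key
    push_cast at h5
    linarith
  have hpow : (q : ℚ) ^ S * ((q : ℚ) ^ (N - 1))⁻¹ = (q : ℚ) ^ (S - (N - 1)) := by
    have h6 : (q : ℚ) ^ (S - (N - 1)) * (q : ℚ) ^ (N - 1) = (q : ℚ) ^ S := by
      rw [← pow_add]
      congr 1
      omega
    rw [← h6, mul_inv_cancel_right₀ (by positivity)]
  rw [hcast, mul_sub, mul_one, inv_pow, hpow]
end

section
/- Let F be a finite field with q elements. The number H_{n,m} of m×m polynomial matrices over F[z] in Hermite form with deg(det) = n satisfies H_{n,m} = q^{mn} · ∏_{j=1}^{n} (1 - q^{-(m+j-1)})/(1 - q^{-j}). -/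
/-!
Subtracting `diag(X ^ d i)` identifies the Hermite forms whose diagonal entries have degrees
`d 0, …, d (m-1)` with the matrices whose entry `(i, j)` has degree `< d i` for `j ≤ i` and vanishes
for `j > i`; there are `q ^ ∑ i, (i + 1) * d i` of them. Since `deg det = ∑ i, d i`, the count is
the sum of these weights over all compositions `d` of `n`. Peeling off the first part of `d`
gives the recursion `H(m+1, n+1) = q H(m+1, n) + q ^ (n+1) H(m, n+1)`, a `q`-Pascal rule which
the closed formula also satisfies.
-/

/-- A square polynomial matrix is in Hermite form if it is lower triangular, has monic
diagonal entries, and each entry below the diagonal has degree strictly less than the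
diagonal entry of its row. -/
def HermiteForm {F : Type*} [Field F] {m : ℕ}
    (D : Matrix (Fin m) (Fin m) (Polynomial F)) : Prop :=
  (∀ i j, i < j → D i j = 0) ∧
  (∀ i, (D i i).Monic) ∧
  (∀ i j, j < i → (D i j).degree < (D i i).degree)

open Finset Polynomial Matrix

namespace Polynomial

theorem sub_X_pow_mem_degreeLT_iff {R : Type*} [Ring R] [Nontrivial R] {p : R[X]} {k : ℕ} :
    p - X ^ k ∈ degreeLT R k ↔ p.Monic ∧ p.natDegree = k := by
  rw [mem_degreeLT]
  constructor
  · intro h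
    rw [← degree_X_pow (R := R)] at h
    rw [← sub_add_cancel p (X ^ k), add_comm]
    exact ⟨monic_X_pow_add (by rwa [degree_X_pow] at h),
      by rw [natDegree_add_eq_left_of_degree_lt h, natDegree_X_pow]⟩
  · rintro ⟨hmon, rfl⟩
    rw [← degree_eq_natDegree hmon.ne_zero]
    exact degree_sub_lt_left (by rw [degree_X_pow, degree_eq_natDegree hmon.ne_zero])
      hmon.ne_zero (by rw [hmon.leadingCoeff, (monic_X_pow _).leadingCoeff])

variable {R : Type*} [Semiring R]

theorem mem_degreeLT_zero {p : R[X]} : p ∈ degreeLT R 0 ↔ p = 0 := by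
  simp [mem_degreeLT]

theorem natCard_degreeLT (k : ℕ) : Nat.card (degreeLT R k) = Nat.card R ^ k := by
  rw [Nat.card_congr (degreeLTEquiv R k).toEquiv, Nat.card_fun, Nat.card_fin]

end Polynomial

theorem Nat.card_subtype_and_mem_eq_sum {α β : Type*} (p : α → Prop) (f : α → β) (s : Finset β)
    (hfin : ∀ b ∈ s, Finite {x // p x ∧ f x = b}) :
    Nat.card {x // p x ∧ f x ∈ s} = ∑ b ∈ s, Nat.card {x // p x ∧ f x = b} := by
  have : ∀ b : s, Finite {x // p x ∧ f x = b} := fun b => hfin b b.2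
  calc Nat.card {x // p x ∧ f x ∈ s}
      = Nat.card (Σ b : s, {x // p x ∧ f x = b}) := Nat.card_congr
        { toFun x := ⟨⟨f x, x.2.2⟩, x.1, x.2.1, rfl⟩
          invFun y := ⟨y.2.1, y.2.2.1, y.2.2.2.symm ▸ y.1.2⟩
          left_inv _ := rfl
          right_inv y := Sigma.subtype_ext (Subtype.ext y.2.2.2) rfl }
    _ = ∑ b ∈ s, Nat.card {x // p x ∧ f x = b} := by
      rw [Nat.card_sigma, sum_coe_sort s fun b => Nat.card {x // p x ∧ f x = b}]

theorem Finset.prod_Icc_one_eq_prod_range {M : Type*} [CommMonoid M] (f : ℕ → M) (n : ℕ) :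
    ∏ j ∈ Icc 1 n, f j = ∏ k ∈ range n, f (k + 1) := by
  rw [range_eq_Ico, prod_Ico_add' f 0 n 1, zero_add]
  rfl

section HermiteForm

variable {F : Type*} [Field F] {m : ℕ}

theorem HermiteForm.natDegree_det {D : Matrix (Fin m) (Fin m) F[X]} (hD : HermiteForm D) :
    D.det.natDegree = ∑ i, (D i i).natDegree := by
  rw [det_of_isLowerTriangular D hD.1, natDegree_prod _ _ fun i _ => (hD.2.1 i).ne_zero]

theorem hermiteForm_and_natDegree_diag_iff {D : Matrix (Fin m) (Fin m) F[X]} {d : Fin m → ℕ} :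
    (HermiteForm D ∧ ∀ i, (D i i).natDegree = d i) ↔
      ∀ i j, (D - diagonal fun i => X ^ d i : Matrix (Fin m) (Fin m) F[X]) i j ∈
        degreeLT F (if j ≤ i then d i else 0) := by
  simp only [Matrix.sub_apply, diagonal_apply]
  constructor
  · rintro ⟨⟨hupper, hmonic, hlower⟩, hdiag⟩ i j
    rcases lt_trichotomy j i with h | rfl | h
    · simpa [h.le, h.ne', mem_degreeLT, ← hdiag i, ← degree_eq_natDegree (hmonic i).ne_zero]
        using hlower i j h
    · simpa using sub_X_pow_mem_degreeLT_iff.2 ⟨hmonic j, hdiag j⟩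
    · simpa [h.not_ge, h.ne, mem_degreeLT_zero] using hupper i j h
  · intro h
    have hdiag i := sub_X_pow_mem_degreeLT_iff.1 (by simpa using h i i)
    refine ⟨⟨fun i j hij => ?_, fun i => (hdiag i).1, fun i j hji => ?_⟩, fun i => (hdiag i).2⟩
    · simpa [hij.not_ge, hij.ne, mem_degreeLT_zero] using h i j
    · rw [degree_eq_natDegree (hdiag i).1.ne_zero, (hdiag i).2]
      simpa [hji.le, hji.ne', mem_degreeLT] using h i j

theorem natCard_hermiteForm_natDegree_diag (d : Fin m → ℕ) :
    Nat.card {D : Matrix (Fin m) (Fin m) F[X] // HermiteForm D ∧ ∀ i, (D i i).natDegree = d i} =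
      Nat.card F ^ ∑ i : Fin m, (i + 1) * d i := calc
  _ = Nat.card {E : Matrix (Fin m) (Fin m) F[X] //
        ∀ i j, E i j ∈ degreeLT F (if j ≤ i then d i else 0)} :=
    Nat.card_congr <| (Equiv.subRight (diagonal fun i => X ^ d i)).subtypeEquiv
      fun _ => hermiteForm_and_natDegree_diag_iff
  _ = Nat.card (∀ i j : Fin m, degreeLT F (if j ≤ i then d i else 0)) :=
    Nat.card_congr <| Equiv.subtypePiEquivPi.trans <| .piCongrRight fun _ => Equiv.subtypePiEquivPi
  _ = Nat.card F ^ ∑ i : Fin m, (i + 1) * d i := by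
    simp_rw [Nat.card_pi, natCard_degreeLT, prod_pow_eq_pow_sum, sum_ite, sum_const_zero, add_zero,
      sum_const, smul_eq_mul, filter_ge_eq_Iic, Fin.card_Iic]

end HermiteForm

def hermiteCount (q m n : ℕ) : ℕ :=
  ∑ d ∈ finAntidiagonal m n, q ^ ∑ i : Fin m, (i + 1) * d i

theorem natCard_hermiteForm_natDegree_det {F : Type*} [Field F] [Finite F] (m n : ℕ) :
    Nat.card {D : Matrix (Fin m) (Fin m) F[X] // HermiteForm D ∧ D.det.natDegree = n} =
      hermiteCount (Nat.card F) m n := by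
  have hfiber (d : Fin m → ℕ) :
      Nat.card {D : Matrix (Fin m) (Fin m) F[X] //
        HermiteForm D ∧ (fun i => (D i i).natDegree) = d} =
        Nat.card F ^ ∑ i : Fin m, (i + 1) * d i := by
    simpa only [funext_iff] using natCard_hermiteForm_natDegree_diag d
  calc _ = Nat.card {D : Matrix (Fin m) (Fin m) F[X] //
        HermiteForm D ∧ (fun i => (D i i).natDegree) ∈ finAntidiagonal m n} :=
      Nat.card_congr <| Equiv.subtypeEquivRight fun D => and_congr_right fun hD => by
        rw [mem_finAntidiagonal, hD.natDegree_det]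
    _ = _ := by
      rw [Nat.card_subtype_and_mem_eq_sum _ _ _ fun d _ =>
        Nat.finite_of_card_ne_zero (by rw [hfiber]; exact pow_ne_zero _ Nat.card_pos.ne')]
      exact sum_congr rfl fun d _ => hfiber d

theorem hermiteCount_zero_right (q m : ℕ) : hermiteCount q m 0 = 1 := by
  have : finAntidiagonal m 0 = {0} := by
    ext d
    simp [funext_iff]
  simp [hermiteCount, this]

theorem hermiteCount_zero_succ (q n : ℕ) : hermiteCount q 0 (n + 1) = 0 := by
  have : finAntidiagonal 0 (n + 1) = ∅ := by
    ext d
    simp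
  simp [hermiteCount, this]

theorem hermiteCount_succ_left (q m n : ℕ) :
    hermiteCount q (m + 1) n = q ^ n * ∑ p ∈ antidiagonal n, hermiteCount q m p.2 := by
  rw [hermiteCount, finAntidiagonal, finAntidiagonal.aux, sum_disjiUnion, mul_sum]
  refine sum_congr rfl fun p hp => ?_
  rw [sum_map, hermiteCount, mul_sum]
  refine sum_congr rfl fun d hd => ?_
  rw [← pow_add, ← HasAntidiagonal.mem_antidiagonal.1 hp, ← mem_finAntidiagonal.1 hd]
  simp only [Function.Embedding.coeFn_mk, Fin.sum_univ_succ, Fin.cons_zero, Fin.cons_succ,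
    Fin.val_zero, Fin.val_succ, add_mul, one_mul, sum_add_distrib]
  ring

theorem hermiteCount_succ_succ (q m n : ℕ) :
    hermiteCount q (m + 1) (n + 1) =
      q * hermiteCount q (m + 1) n + q ^ (n + 1) * hermiteCount q m (n + 1) := by
  rw [hermiteCount_succ_left, hermiteCount_succ_left, Nat.sum_antidiagonal_succ]
  ring

section hermiteCountFormula

variable {K : Type*} [Field K]

def hermiteCountFormula (Q : K) (m n : ℕ) : K :=
  Q ^ (m * n) * ∏ j ∈ Icc 1 n, (1 - Q⁻¹ ^ (m + j - 1)) / (1 - Q⁻¹ ^ j)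

theorem hermiteCountFormula_eq (Q : K) (m n : ℕ) :
    hermiteCountFormula Q m n =
      Q ^ (m * n) * (∏ k ∈ range n, (1 - Q⁻¹ ^ (m + k))) / ∏ k ∈ range n, (1 - Q⁻¹ ^ (k + 1)) := by
  rw [hermiteCountFormula, prod_Icc_one_eq_prod_range, prod_div_distrib, mul_div_assoc]
  simp only [Nat.add_sub_cancel, ← add_assoc]

theorem hermiteCountFormula_zero_right (Q : K) (m : ℕ) : hermiteCountFormula Q m 0 = 1 := by
  simp [hermiteCountFormula]

theorem hermiteCountFormula_zero_succ (Q : K) (n : ℕ) : hermiteCountFormula Q 0 (n + 1) = 0 := by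
  simp [hermiteCountFormula_eq, prod_range_succ']

theorem hermiteCountFormula_succ_succ {Q : K} (hQ0 : Q ≠ 0) (hQ : ∀ j ≠ 0, Q ^ j ≠ 1) (m n : ℕ) :
    hermiteCountFormula Q (m + 1) (n + 1) =
      Q * hermiteCountFormula Q (m + 1) n + Q ^ (n + 1) * hermiteCountFormula Q m (n + 1) := by
  have hden (k : ℕ) : 1 - Q⁻¹ ^ (k + 1) ≠ 0 := by
    rw [sub_ne_zero, ne_comm, inv_pow, inv_ne_one]
    exact hQ _ k.succ_ne_zero
  have hnum : ∏ k ∈ range (n + 1), (1 - Q⁻¹ ^ (m + k)) =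
      (1 - Q⁻¹ ^ m) * ∏ k ∈ range n, (1 - Q⁻¹ ^ (m + 1 + k)) := by
    rw [prod_range_succ', mul_comm, add_zero]
    simp only [add_assoc, add_comm 1]
  rw [hermiteCountFormula_eq, hermiteCountFormula_eq, hermiteCountFormula_eq, hnum,
    prod_range_succ, prod_range_succ]
  have hB : ∏ k ∈ range n, (1 - Q⁻¹ ^ (k + 1)) ≠ 0 := prod_ne_zero_iff.2 fun k _ => hden k
  have hu := hden n
  have hQm : Q⁻¹ ^ m * Q ^ m = 1 := by rw [← mul_pow, inv_mul_cancel₀ hQ0, one_pow]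
  generalize ∏ k ∈ range n, (1 - Q⁻¹ ^ (m + 1 + k)) = A
  generalize ∏ k ∈ range n, (1 - Q⁻¹ ^ (k + 1)) = B at hB ⊢
  generalize Q⁻¹ = x at hu hQm ⊢
  -- the `q`-Pascal identity `1 - x ^ (m + n + 1) = x ^ m * (1 - x ^ (n + 1)) + (1 - x ^ m)`
  field_simp
  linear_combination A * (1 - x ^ (n + 1)) * Q ^ ((m + 1) * n + 1) * hQm

theorem cast_hermiteCount {q : ℕ} (hq0 : (q : K) ≠ 0) (hq : ∀ j ≠ 0, (q : K) ^ j ≠ 1) (m n : ℕ) :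
    (hermiteCount q m n : K) = hermiteCountFormula (q : K) m n := by
  induction m generalizing n with
  | zero =>
    cases n with
    | zero => simp [hermiteCount_zero_right, hermiteCountFormula_zero_right]
    | succ n => simp [hermiteCount_zero_succ, hermiteCountFormula_zero_succ]
  | succ m ihm =>
    induction n with
    | zero => simp [hermiteCount_zero_right, hermiteCountFormula_zero_right]
    | succ n ihn =>
      rw [hermiteCount_succ_succ, hermiteCountFormula_succ_succ hq0 hq]
      push_cast
      rw [ihm, ihn]

end hermiteCountFormula

theorem stmt10_general (F : Type*) [Field F] [Fintype F] (m n : ℕ) :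
    (Nat.card {D : Matrix (Fin m) (Fin m) (Polynomial F) //
        HermiteForm D ∧ D.det.natDegree = n} : ℚ) =
      (Fintype.card F : ℚ) ^ (m * n) *
        ∏ j ∈ Finset.Icc 1 n,
          (1 - ((Fintype.card F : ℚ))⁻¹ ^ (m + j - 1)) /
            (1 - ((Fintype.card F : ℚ))⁻¹ ^ j) := by
  have hq : 1 < (Fintype.card F : ℚ) := by exact_mod_cast Fintype.one_lt_card
  rw [natCard_hermiteForm_natDegree_det, Nat.card_eq_fintype_card]
  exact cast_hermiteCount (by positivity) (fun j hj => (one_lt_pow₀ hq hj).ne') m n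

/-- The number `H_{n,m}` of `m × m` polynomial matrices over a finite field `F` with `q`
elements in Hermite form with `deg det = n` satisfies
`H_{n,m} = q ^ (m n) * ∏_{j=1}^{n} (1 - q^{-(m+j-1)}) / (1 - q^{-j})`. -/
theorem stmt10 (F : Type*) [Field F] [Fintype F] (m n : ℕ) (hm : 1 ≤ m) (hn : 1 ≤ n) :
    (Nat.card {D : Matrix (Fin m) (Fin m) (Polynomial F) //
        HermiteForm D ∧ D.det.natDegree = n} : ℚ) =
      (Fintype.card F : ℚ) ^ (m * n) *
        ∏ j ∈ Finset.Icc 1 n,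
          (1 - ((Fintype.card F : ℚ))⁻¹ ^ (m + j - 1)) /
            (1 - ((Fintype.card F : ℚ))⁻¹ ^ j) :=
  stmt10_general F m n
end

section
/- Let C : ℕ → ℤ satisfy C(2) = -Σ_{y=2}^{m+1} binomial(2, y) and the recursion C(N) = Σ_{k=1}^{N-2} (-1)^{k+1} binomial(N, k) C(N-k) - Σ_{i=N-1}^{min(m, N-1)} 1 for N ≥ 3, where m ≥ 1 is fixed. Then C(N) = -Σ_{y=2}^{m+1} binomial(N, y) for all N ≥ 2. -/
/-!
Strong induction on `N`. Substituting the closed form for `C (N - k)` and exchanging the sums,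
the identity `C(N,k) C(N-k,y) = C(N,y) C(N-y,k)` turns the coefficient of `C(N,y)` into the
alternating sum `∑_{k=1}^{N-2} (-1)^(k+1) C(N-y,k)`, which is `1` for `2 ≤ y < N` (as `N - y ≤ N - 2`)
and `0` for `y = N`. That missing term at `y = N` is exactly the second sum of the recursion.
-/

open Finset

theorem Nat.choose_mul_choose_sub_comm (n k y : ℕ) :
    n.choose k * (n - k).choose y = n.choose y * (n - y).choose k := by
  have hk := Nat.choose_mul (n := n) (k := k + y) (s := k) (Nat.le_add_right k y)
  have hy := Nat.choose_mul (n := n) (k := k + y) (s := y) (Nat.le_add_left y k)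
  rw [Nat.add_sub_cancel_left] at hk
  rw [Nat.add_sub_cancel, ← Nat.choose_symm_add] at hy
  rw [← hk, ← hy]

theorem Int.alternating_sum_Icc_one_choose {n M : ℕ} (hn : n ≠ 0) (hM : n ≤ M) :
    ∑ k ∈ Icc 1 M, (-1 : ℤ) ^ (k + 1) * n.choose k = 1 := by
  obtain ⟨n, rfl⟩ := Nat.exists_eq_succ_of_ne_zero hn
  have h := Int.alternating_sum_range_choose_eq_choose (n := n) (m := M)
  rw [Nat.choose_eq_zero_of_lt (by omega), Nat.cast_zero, mul_zero, range_eq_Ico,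
    sum_eq_sum_Ico_succ_bot (by omega), Ico_add_one_right_eq_Icc] at h
  simp only [pow_succ, mul_neg_one, neg_mul, sum_neg_distrib]
  simpa [add_eq_zero_iff_neg_eq'] using h

theorem sum_Icc_alternating_choose_mul_choose_sub {N y : ℕ} (hy : 2 ≤ y) :
    ∑ k ∈ Icc 1 (N - 2), (-1 : ℤ) ^ (k + 1) * N.choose k * (N - k).choose y
      = N.choose y - if y = N then 1 else 0 := by
  have hcomm : ∀ k ∈ Icc 1 (N - 2), (-1 : ℤ) ^ (k + 1) * N.choose k * (N - k).choose y
      = N.choose y * ((-1 : ℤ) ^ (k + 1) * (N - y).choose k) := fun k _ => by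
    have := congrArg (Nat.cast : ℕ → ℤ) (Nat.choose_mul_choose_sub_comm N k y)
    push_cast at this
    linear_combination (-1 : ℤ) ^ (k + 1) * this
  rw [sum_congr rfl hcomm, ← mul_sum]
  rcases lt_or_ge y N with hyN | hNy
  · rw [Int.alternating_sum_Icc_one_choose (by omega) (by omega), if_neg hyN.ne]
    ring
  · have hvanish : ∀ k ∈ Icc 1 (N - 2), (-1 : ℤ) ^ (k + 1) * (N - y).choose k = 0 :=
      fun k hk => by rw [Nat.choose_eq_zero_of_lt (by grind), Nat.cast_zero, mul_zero]
    rw [sum_eq_zero hvanish]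
    obtain rfl | hlt := hNy.eq_or_lt
    · simp
    · simp [Nat.choose_eq_zero_of_lt hlt, hlt.ne']

theorem sum_Icc_ite_eq_sum_Icc_pred_min {m N : ℕ} (hN : 2 ≤ N) :
    ∑ y ∈ Icc 2 (m + 1), (if y = N then (1 : ℤ) else 0)
      = ∑ _i ∈ Icc (N - 1) (min m (N - 1)), (1 : ℤ) := by
  rw [sum_ite_eq', sum_const, Nat.card_Icc, nsmul_one]
  split_ifs with h <;> rw [mem_Icc] at h <;> omega

theorem stmt12_general (m : ℕ) (C : ℕ → ℤ)
    (h2 : C 2 = -∑ y ∈ Finset.Icc 2 (m + 1), (Nat.choose 2 y : ℤ))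
    (hrec : ∀ N, 3 ≤ N →
      C N = (∑ k ∈ Finset.Icc 1 (N - 2),
          (-1 : ℤ) ^ (k + 1) * (Nat.choose N k : ℤ) * C (N - k)) -
        ∑ _i ∈ Finset.Icc (N - 1) (min m (N - 1)), (1 : ℤ)) :
    ∀ N, 2 ≤ N → C N = -∑ y ∈ Finset.Icc 2 (m + 1), (Nat.choose N y : ℤ) := by
  intro N hN
  induction N using Nat.strong_induction_on with
  | _ N ih =>
  obtain rfl | h3 := hN.eq_or_lt
  · exact h2
  have hsub : ∀ k ∈ Icc 1 (N - 2), (-1 : ℤ) ^ (k + 1) * N.choose k * C (N - k)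
      = -∑ y ∈ Icc 2 (m + 1), (-1 : ℤ) ^ (k + 1) * N.choose k * (N - k).choose y := by
    intro k hk
    rw [mem_Icc] at hk
    rw [ih (N - k) (by omega) (by omega), mul_neg, mul_sum]
  rw [hrec N h3, sum_congr rfl hsub, sum_neg_distrib, sum_comm,
    sum_congr rfl fun y hy => sum_Icc_alternating_choose_mul_choose_sub (mem_Icc.mp hy).1,
    sum_sub_distrib, sum_Icc_ite_eq_sum_Icc_pred_min hN]
  ring

/-- Solution of the recursion for the coefficient `C(N)` of `t^m` in the probability of
mutual left coprimeness: if `C 2 = -∑_{y=2}^{m+1} C(2, y)` and, for `N ≥ 3`,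
`C N = ∑_{k=1}^{N-2} (-1)^{k+1} C(N, k) C(N - k) - ∑_{i=N-1}^{min(m, N-1)} 1`,
then `C N = -∑_{y=2}^{m+1} C(N, y)` for all `N ≥ 2`. -/
theorem stmt12 (m : ℕ) (hm : 1 ≤ m) (C : ℕ → ℤ)
    (h2 : C 2 = -∑ y ∈ Finset.Icc 2 (m + 1), (Nat.choose 2 y : ℤ))
    (hrec : ∀ N, 3 ≤ N →
      C N = (∑ k ∈ Finset.Icc 1 (N - 2),
          (-1 : ℤ) ^ (k + 1) * (Nat.choose N k : ℤ) * C (N - k)) -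
        ∑ _i ∈ Finset.Icc (N - 1) (min m (N - 1)), (1 : ℤ)) :
    ∀ N, 2 ≤ N → C N = -∑ y ∈ Finset.Icc 2 (m + 1), (Nat.choose N y : ℤ) :=
  stmt12_general m C h2 hrec
end

section
/- Over any field F, the 2×2 polynomial matrices D_1(z) = [[1,0],[1,z]], D_2(z) = [[1,0],[0,z]], D_3(z) = [[z,0],[0,1]] are pairwise left coprime, but the 4×6 block matrix [[D_1, D_2, 0],[0, D_2, D_3]] has rank less than 4 at z = 0, so D_1, D_2, D_3 are not mutually left coprime. -/
/-!
Pairwise left coprimeness is witnessed by Bezout identities `Dᵢ P + Dⱼ Q = 1` with constant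
`P, Q`; they hold over `F[z]`, hence after evaluation at every `z`, where they exhibit a right
inverse of `[Dᵢ(z) Dⱼ(z)]`. For the staircase matrix, the combination of rows
`row₁ - row₂ - row₃` is divisible by `z`, so at `z = 0` the rows are dependent and the rank
drops below `4`.
-/

open Polynomial

namespace Matrix

section Rank

variable {m n K : Type*} [Fintype m] [Fintype n] [Field K]

theorem rank_eq_card_height_of_mul_eq_one [DecidableEq m] {A : Matrix m n K} {B : Matrix n m K}
    (h : A * B = 1) : A.rank = Fintype.card m :=
  le_antisymm A.rank_le_card_height <| by
    simpa [h, rank_one] using rank_mul_le_left A B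

theorem rank_lt_card_height_of_vecMul_eq_zero {A : Matrix m n K} {v : m → K} (hv : v ≠ 0)
    (h : v ᵥ* A = 0) : A.rank < Fintype.card m := by
  refine A.rank_le_card_height.lt_of_ne fun hA => hv ?_
  have hrows : LinearIndependent K A.row := by
    rw [linearIndependent_iff_card_eq_finrank_span, ← hA, rank_eq_finrank_span_row, Set.finrank]
  exact vecMul_injective_iff.mpr hrows (h.trans (zero_vecMul A).symm)

theorem rank_fromCols_map_eq_card_of_mul_add_mul_eq_one {R : Type*} [CommRing R] [DecidableEq m]
    {A B P Q : Matrix m m R} (h : A * P + B * Q = 1) (f : R →+* K) :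
    (fromCols (A.map f) (B.map f)).rank = Fintype.card m :=
  rank_eq_card_height_of_mul_eq_one (B := fromRows (P.map f) (Q.map f)) <| by
    rw [fromCols_mul_fromRows, ← Matrix.map_mul, ← Matrix.map_mul, ← Matrix.map_add _ (map_add f),
      h, Matrix.map_one _ f.map_zero f.map_one]

end Rank

def staircase {m n₁ n₂ n₃ R : Type*} [Zero R] (A : Matrix m n₁ R) (B : Matrix m n₂ R)
    (C : Matrix m n₃ R) : Matrix (m ⊕ m) (n₁ ⊕ (n₂ ⊕ n₃)) R :=
  fromBlocks A (fromCols B 0) 0 (fromCols B C)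

end Matrix

namespace StaircaseCounterexample

open Matrix

variable (R : Type*) [CommRing R]

noncomputable def D₁ : Matrix (Fin 2) (Fin 2) R[X] := !![1, 0; 1, X]

noncomputable def D₂ : Matrix (Fin 2) (Fin 2) R[X] := !![1, 0; 0, X]

noncomputable def D₃ : Matrix (Fin 2) (Fin 2) R[X] := !![X, 0; 0, 1]

theorem D₁_mul_add_D₂_mul_eq_one : D₁ R * !![0, 1; 0, 0] + D₂ R * !![1, -1; 0, 0] = 1 := by
  simp [D₁, D₂, one_fin_two]

theorem D₁_mul_add_D₃_mul_eq_one : D₁ R * !![1, 0; 0, 0] + D₃ R * !![0, 0; -1, 1] = 1 := by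
  simp [D₁, D₃, one_fin_two]

theorem D₂_mul_add_D₃_mul_eq_one : D₂ R * !![1, 0; 0, 0] + D₃ R * !![0, 0; 0, 1] = 1 := by
  simp [D₂, D₃, one_fin_two]

variable {R}

theorem vecMul_staircase_map_eq_zero {S : Type*} [CommRing S] (f : R[X] →+* S) (hf : f X = 0) :
    Sum.elim ![1, -1] ![-1, 0] ᵥ* (staircase (D₁ R) (D₂ R) (D₃ R)).map f = 0 := by
  ext (j | j | j) <;> fin_cases j <;>
    simp [staircase, D₁, D₂, D₃, vecMul, dotProduct, Fintype.sum_sum_type, Fin.sum_univ_two, hf]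

theorem rank_staircase_map_lt_four {K : Type*} [Field K] (f : R[X] →+* K) (hf : f X = 0) :
    ((staircase (D₁ R) (D₂ R) (D₃ R)).map f).rank < 4 :=
  rank_lt_card_height_of_vecMul_eq_zero (fun h => by simpa using congrFun h (Sum.inl 0))
    (vecMul_staircase_map_eq_zero f hf)

end StaircaseCounterexample

open StaircaseCounterexample

/-- Over any field `F`, the matrices `D₁ = [[1,0],[1,z]]`, `D₂ = [[1,0],[0,z]]`,
`D₃ = [[z,0],[0,1]]` are pairwise left coprime, but the staircase block matrix
`[[D₁, D₂, 0],[0, D₂, D₃]]` has rank less than `4` at `z = 0`; hence `D₁, D₂, D₃` are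
not mutually left coprime. -/
theorem stmt17 (F : Type*) [Field F] :
    let D₁ : Matrix (Fin 2) (Fin 2) (Polynomial F) := !![1, 0; 1, X]
    let D₂ : Matrix (Fin 2) (Fin 2) (Polynomial F) := !![1, 0; 0, X]
    let D₃ : Matrix (Fin 2) (Fin 2) (Polynomial F) := !![X, 0; 0, 1]
    let M : Matrix (Fin 2 ⊕ Fin 2) (Fin 2 ⊕ (Fin 2 ⊕ Fin 2)) (Polynomial F) :=
      Matrix.fromBlocks D₁ (Matrix.fromCols D₂ 0) 0 (Matrix.fromCols D₂ D₃)
    (∀ z : AlgebraicClosure F,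
        (Matrix.fromCols (D₁.map (aeval z)) (D₂.map (aeval z))).rank = 2) ∧
    (∀ z : AlgebraicClosure F,
        (Matrix.fromCols (D₁.map (aeval z)) (D₃.map (aeval z))).rank = 2) ∧
    (∀ z : AlgebraicClosure F,
        (Matrix.fromCols (D₂.map (aeval z)) (D₃.map (aeval z))).rank = 2) ∧
    (M.map (Polynomial.eval (0 : F))).rank < 4 ∧
    ¬ (∀ z : AlgebraicClosure F, (M.map (aeval z)).rank = 4) :=
  ⟨fun z => Matrix.rank_fromCols_map_eq_card_of_mul_add_mul_eq_one
      (D₁_mul_add_D₂_mul_eq_one F) (aeval z).toRingHom,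
    fun z => Matrix.rank_fromCols_map_eq_card_of_mul_add_mul_eq_one
      (D₁_mul_add_D₃_mul_eq_one F) (aeval z).toRingHom,
    fun z => Matrix.rank_fromCols_map_eq_card_of_mul_add_mul_eq_one
      (D₂_mul_add_D₃_mul_eq_one F) (aeval z).toRingHom,
    rank_staircase_map_lt_four (evalRingHom 0) eval_X,
    fun h => (h 0).not_lt (rank_staircase_map_lt_four (aeval 0).toRingHom (aeval_X 0))⟩
end

section
/- Let (A,B) ∈ F^{n×n} × F^{n×m} and suppose (zI - A)^{-1} B = P(z) Q(z)^{-1} with P ∈ F[z]^{n×m}, Q ∈ F[z]^{m×m}, det(Q) ≢ 0. Then (A,B) is reachable (the Kalman matrix [B, AB, ..., A^{n-1}B] has rank n) if and only if the only row vector c ∈ F^{1×n} with c·P ≡ 0 is c = 0. In particular, reachability depends only on P. -/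
/-!
Let `Hₑ(A)` be the partial sums of Horner's scheme for `χ = χ_A` evaluated at `A`
(`H₀ = 1`, `Hₑ₊₁ = Hₑ A + a_{n-1-e}`). Running the scheme in `X` with these matrix coefficients
gives `N(X) = ∑_{e<n} X^{n-1-e} Hₑ(A)` with `N(X) (X - A) = χ(X) - χ(A) = χ(X)` by
Cayley–Hamilton, so `(X - A)⁻¹ = χ⁻¹ N(X)` over `F(X)`. As `Q` is invertible, `c P = 0` iff
`c (X - A)⁻¹ B = 0` iff `c N(X) B = 0` iff `c Hₑ(A) B = 0` for all `e < n`. Since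
`Hₑ(A) = Aᵉ + (lower powers of A)`, this triangular system is equivalent to `c Aᵉ B = 0` for all
`e < n`, i.e. to `c` annihilating the Kalman matrix.
-/

open Matrix Polynomial

namespace Polynomial

section Horner

variable {R S : Type*} [CommSemiring R] [Semiring S] [Algebra R S]

def hornerPartial (p : R[X]) (x : S) : ℕ → S
  | 0 => algebraMap R S p.leadingCoeff
  | d + 1 => hornerPartial p x d * x + algebraMap R S (p.coeff (p.natDegree - (d + 1)))

theorem hornerPartial_eq_sum (p : R[X]) (x : S) {d : ℕ} (hd : d ≤ p.natDegree) :
    hornerPartial p x d =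
      ∑ j ∈ Finset.range (d + 1), p.coeff (p.natDegree - d + j) • x ^ j := by
  induction d with
  | zero => simp [hornerPartial, Algebra.algebraMap_eq_smul_one]
  | succ d ih =>
    rw [hornerPartial, ih (by omega), Finset.sum_range_succ' _ (d + 1), Finset.sum_mul,
      Algebra.algebraMap_eq_smul_one]
    congr 1
    · refine Finset.sum_congr rfl fun j _ => ?_
      rw [smul_mul_assoc, ← pow_succ,
        show p.natDegree - d + j = p.natDegree - (d + 1) + (j + 1) by omega]
    · simp

theorem hornerPartial_natDegree (p : R[X]) (x : S) :
    hornerPartial p x p.natDegree = aeval x p := by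
  rw [hornerPartial_eq_sum p x le_rfl, aeval_eq_sum_range]
  simp

end Horner

theorem X_mul_add_C_eq_zero_iff {R : Type*} [Semiring R] {p : R[X]} {a : R} :
    X * p + C a = 0 ↔ p = 0 ∧ a = 0 := by
  constructor
  · intro h
    obtain rfl : a = 0 := by simpa using congrArg (coeff · 0) h
    exact ⟨isRegular_X.left (by simpa using h), rfl⟩
  · rintro ⟨rfl, rfl⟩
    simp

theorem X_smul_add_C_eq_zero_iff {R κ : Type*} [Semiring R] {u : κ → R[X]} {v : κ → R} :
    ((X : R[X]) • u + fun j => C (v j)) = 0 ↔ u = 0 ∧ v = 0 := by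
  simp only [funext_iff, Pi.add_apply, Pi.smul_apply, smul_eq_mul, Pi.zero_apply,
    X_mul_add_C_eq_zero_iff, forall_and]

end Polynomial

namespace Matrix

section VecMul

variable {R : Type*} [CommRing R] {ι κ : Type*} [Fintype ι]

theorem rank_eq_card_iff_vecMul_eq_zero {K : Type*} [Field K] [Fintype κ] (M : Matrix ι κ K) :
    M.rank = Fintype.card ι ↔ ∀ c, c ᵥ* M = 0 → c = 0 := by
  rw [rank_eq_finrank_span_row, ← Set.finrank, eq_comm,
    ← linearIndependent_iff_card_eq_finrank_span, ← vecMul_injective_iff, ← coe_vecMulLinear,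
    injective_iff_map_eq_zero]
  rfl

theorem map_vecMul_map_eq_zero_iff {S : Type*} [CommRing S] {f : R →+* S}
    (hf : Function.Injective f) (v : ι → R) (M : Matrix ι κ R) :
    (fun i => f (v i)) ᵥ* M.map f = 0 ↔ v ᵥ* M = 0 := by
  simp only [funext_iff, Pi.zero_apply]
  exact forall_congr' fun j => by
    rw [← Function.comp_def, ← RingHom.map_vecMul, map_eq_zero_iff f hf]

theorem vecMul_map_C (c : ι → R) (M : Matrix ι κ R) :
    (fun i => C (c i)) ᵥ* M.map C = fun j => C ((c ᵥ* M) j) :=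
  funext fun j => (RingHom.map_vecMul C M c j).symm

theorem vecMul_of_prod_eq_zero_iff {α : Type*} (M : α → Matrix ι κ R) (c : ι → R) :
    c ᵥ* (of fun r (p : α × κ) => M p.1 r p.2) = 0 ↔ ∀ a, c ᵥ* M a = 0 := by
  simp only [funext_iff, Prod.forall]
  rfl

theorem vecMul_mul_nonsing_inv_eq_zero_iff [Fintype κ] [DecidableEq κ] {M : Matrix κ κ R}
    (hM : IsUnit M.det) (v : ι → R) (N : Matrix ι κ R) :
    v ᵥ* (N * M⁻¹) = 0 ↔ v ᵥ* N = 0 := by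
  refine ⟨fun h => ?_, fun h => by rw [← vecMul_vecMul, h, zero_vecMul]⟩
  simpa [vecMul_vecMul, Matrix.mul_assoc, nonsing_inv_mul _ hM] using congrArg (· ᵥ* M) h

end VecMul

section Charmatrix

variable {R : Type*} [CommRing R] {ι κ : Type*} [Fintype ι] [DecidableEq ι]

theorem mapMatrix_C_algebraMap (a : R) :
    C.mapMatrix (algebraMap R (Matrix ι ι R) a) = C a • (1 : Matrix ι ι R[X]) := by
  rw [RingHom.mapMatrix_apply, algebraMap_eq_diagonal, diagonal_map (map_zero C),
    smul_one_eq_diagonal]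
  rfl

/-- At `d = card ι` this is `adjugate (charmatrix A)`, computed by Horner's scheme in `X`. -/
noncomputable def charmatrixAdjHorner (A : Matrix ι ι R) : ℕ → Matrix ι ι R[X]
  | 0 => 0
  | d + 1 => (X : R[X]) • charmatrixAdjHorner A d + (hornerPartial A.charpoly A d).map C

variable (A : Matrix ι ι R)

theorem charmatrixAdjHorner_mul_charmatrix (d : ℕ) :
    charmatrixAdjHorner A d * charmatrix A =
      hornerPartial A.charpoly (X : R[X]) d • 1 - (hornerPartial A.charpoly A d).map C := by
  induction d with
  | zero =>
    rw [charmatrixAdjHorner, zero_mul, hornerPartial, hornerPartial, ← RingHom.mapMatrix_apply,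
      mapMatrix_C_algebraMap, Polynomial.algebraMap_eq, sub_self]
  | succ d ih =>
    rw [charmatrixAdjHorner, add_mul, smul_mul, ih, hornerPartial, hornerPartial, charmatrix,
      ← RingHom.mapMatrix_apply, ← RingHom.mapMatrix_apply, map_add, map_mul,
      mapMatrix_C_algebraMap, scalar_apply, ← smul_one_eq_diagonal, mul_sub, Matrix.mul_smul,
      mul_one, Polynomial.algebraMap_eq]
    module

theorem charmatrixAdjHorner_card_mul_charmatrix [Nontrivial R] :
    charmatrixAdjHorner A (Fintype.card ι) * charmatrix A = A.charpoly • 1 := by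
  rw [charmatrixAdjHorner_mul_charmatrix, ← charpoly_natDegree_eq_dim A, hornerPartial_natDegree,
    hornerPartial_natDegree, aeval_X_left_apply, aeval_self_charpoly,
    Matrix.map_zero _ (map_zero C), sub_zero]

theorem vecMul_charmatrixAdjHorner_mul_eq_zero_iff (B : Matrix ι κ R) (c : ι → R) (d : ℕ) :
    (fun i => C (c i)) ᵥ* (charmatrixAdjHorner A d * B.map C) = 0 ↔
      ∀ e < d, c ᵥ* (hornerPartial A.charpoly A e * B) = 0 := by
  induction d with
  | zero => simp [charmatrixAdjHorner]
  | succ d ih =>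
    rw [charmatrixAdjHorner, Matrix.add_mul, Matrix.smul_mul, vecMul_add, vecMul_smul,
      ← Matrix.map_mul, vecMul_map_C, Nat.forall_lt_succ_right, ← ih, X_smul_add_C_eq_zero_iff]

theorem forall_vecMul_hornerPartial_mul_eq_zero_iff {p : R[X]} (hp : p.Monic) (c : ι → R)
    (B : Matrix ι κ R) (d : ℕ) :
    (∀ e < d, c ᵥ* (hornerPartial p A e * B) = 0) ↔ ∀ e < d, c ᵥ* (A ^ e * B) = 0 := by
  induction d generalizing B with
  | zero => simp
  | succ d ih =>
    simp only [Nat.forall_lt_succ_left, hornerPartial, hp.leadingCoeff, map_one, pow_zero,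
      Matrix.one_mul]
    refine and_congr_right fun hB => ?_
    simp only [Matrix.add_mul, vecMul_add, Algebra.algebraMap_eq_smul_one, Matrix.smul_mul,
      Matrix.one_mul, vecMul_smul, hB, smul_zero, add_zero, Matrix.mul_assoc, pow_succ]
    exact ih (A * B)

theorem inv_map_eq_smul_of_mul_eq_smul_one {K : Type*} [Field K] {f : R →+* K}
    {M N : Matrix ι ι R} {r : R} (h : N * M = r • 1) (hr : f r ≠ 0) :
    (M.map f)⁻¹ = (f r)⁻¹ • N.map f := by
  refine inv_eq_left_inv ?_
  rw [Matrix.smul_mul, ← RingHom.mapMatrix_apply, ← RingHom.mapMatrix_apply, ← map_mul, h,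
    RingHom.mapMatrix_apply, smul_one_eq_diagonal, diagonal_map (map_zero f),
    ← smul_one_eq_diagonal, smul_smul, inv_mul_cancel₀ hr, one_smul]

theorem charmatrix_map_algebraMap {K : Type*} [Field K] [Algebra R[X] K] [Algebra R K]
    [IsScalarTower R R[X] K] :
    (charmatrix A).map (algebraMap R[X] K) =
      algebraMap R[X] K X • 1 - A.map (algebraMap R K) := by
  ext i j
  by_cases h : i = j
  · subst h
    simp [IsScalarTower.algebraMap_apply R R[X] K, Algebra.algebraMap_eq_smul_one, sub_smul]
  · simp [h, IsScalarTower.algebraMap_apply R R[X] K]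

end Charmatrix

theorem vecMul_eq_zero_iff_of_resolvent_eq {F ι κ : Type*} [Field F] [Fintype ι]
    [DecidableEq ι] [Fintype κ] [DecidableEq κ] {A : Matrix ι ι F} {B : Matrix ι κ F}
    {P : Matrix ι κ F[X]} {Q : Matrix κ κ F[X]} (hQ : Q.det ≠ 0)
    (hfac : ((RatFunc.X : RatFunc F) • (1 : Matrix ι ι (RatFunc F)) -
          A.map (algebraMap F (RatFunc F)))⁻¹ * B.map (algebraMap F (RatFunc F)) =
      P.map (algebraMap F[X] (RatFunc F)) * (Q.map (algebraMap F[X] (RatFunc F)))⁻¹)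
    (c : ι → F) :
    (fun i => C (c i)) ᵥ* P = 0 ↔ ∀ d < Fintype.card ι, c ᵥ* (A ^ d * B) = 0 := by
  set φ := algebraMap F[X] (RatFunc F)
  have hφ : Function.Injective φ := RatFunc.algebraMap_injective F
  have hQφ : IsUnit (Q.map φ).det := by
    rw [← RingHom.mapMatrix_apply, ← RingHom.map_det, isUnit_iff_ne_zero, map_ne_zero_iff φ hφ]
    exact hQ
  have hχ : φ A.charpoly ≠ 0 := (map_ne_zero_iff φ hφ).mpr A.charpoly_monic.ne_zero
  have hB : B.map (algebraMap F (RatFunc F)) = (B.map C).map φ := by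
    rw [Matrix.map_map]
    rfl
  rw [← RatFunc.algebraMap_X, ← charmatrix_map_algebraMap,
    inv_map_eq_smul_of_mul_eq_smul_one (charmatrixAdjHorner_card_mul_charmatrix A) hχ, hB,
    Matrix.smul_mul, ← Matrix.map_mul] at hfac
  calc (fun i => C (c i)) ᵥ* P = 0
      ↔ (fun i => φ (C (c i))) ᵥ* (P.map φ * (Q.map φ)⁻¹) = 0 := by
        rw [vecMul_mul_nonsing_inv_eq_zero_iff hQφ, map_vecMul_map_eq_zero_iff hφ]
    _ ↔ (fun i => φ (C (c i))) ᵥ*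
          (charmatrixAdjHorner A (Fintype.card ι) * B.map C).map φ = 0 := by
        rw [← hfac, vecMul_smul, smul_eq_zero, or_iff_right (inv_ne_zero hχ)]
    _ ↔ ∀ d < Fintype.card ι, c ᵥ* (A ^ d * B) = 0 := by
        rw [map_vecMul_map_eq_zero_iff hφ, vecMul_charmatrixAdjHorner_mul_eq_zero_iff,
          forall_vecMul_hornerPartial_mul_eq_zero_iff A A.charpoly_monic]

end Matrix

/-- Let `(A, B)` be a linear system over a field `F` and suppose
`(zI - A)⁻¹ B = P(z) Q(z)⁻¹` (over the field of rational functions) with `P, Q`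
polynomial matrices and `det Q ≢ 0`. Then `(A, B)` is reachable (the Kalman matrix
`[B, AB, …, A^{n-1}B]` has rank `n`) if and only if the only row vector `c` with
`c ⬝ P ≡ 0` is `c = 0`. In particular, reachability depends only on `P`. -/
theorem stmt18 (F : Type*) [Field F] (n m : ℕ)
    (A : Matrix (Fin n) (Fin n) F) (B : Matrix (Fin n) (Fin m) F)
    (P : Matrix (Fin n) (Fin m) (Polynomial F))
    (Q : Matrix (Fin m) (Fin m) (Polynomial F)) (hQ : Q.det ≠ 0)
    (hfac :
      ((RatFunc.X : RatFunc F) • (1 : Matrix (Fin n) (Fin n) (RatFunc F)) -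
          A.map (algebraMap F (RatFunc F)))⁻¹ *
        B.map (algebraMap F (RatFunc F)) =
      P.map (algebraMap (Polynomial F) (RatFunc F)) *
        (Q.map (algebraMap (Polynomial F) (RatFunc F)))⁻¹) :
    (Matrix.of fun (r : Fin n) (c : Fin n × Fin m) =>
        (A ^ (c.1 : ℕ) * B) r c.2).rank = n ↔
      ∀ c : Fin n → F, (fun i => Polynomial.C (c i)) ᵥ* P = 0 → c = 0 := by
  have hrank := rank_eq_card_iff_vecMul_eq_zero
    (of fun (r : Fin n) (c : Fin n × Fin m) => (A ^ (c.1 : ℕ) * B) r c.2)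
  rw [Fintype.card_fin] at hrank
  refine hrank.trans (forall_congr' fun c => ?_)
  rw [vecMul_of_prod_eq_zero_iff (fun d : Fin n => A ^ (d : ℕ) * B),
    vecMul_eq_zero_iff_of_resolvent_eq hQ hfac, Fintype.card_fin, Fin.forall_iff]
end
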